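/- arXiv:hep-th/9506215 — 5 statements merged into one kernel-verified Lean document; each statement's English description precedes it below -/
import Mathlib

section
/- If numbers Y(i,j) for i in the integers and j in {1,...,n}, with Y(i,0)=Y(i,n+1)=0, satisfy the Y-system Y(i-1,j)Y(i+1,j) = (1+Y(i,j-1))(1+Y(i,j+1)) (with all Y(i,j) nonzero and 1+Y(i,j) nonzero for 1≤j≤n), then Y(i,j) = Y(i+n+3, n+1-j) for all i in ℤ and j in {1,...,n}. -/
/-!
Choose `t` with `t (i - 1) * t (i + 1) = 1 + Y i 1` (each step of this two-sided recursion is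
invertible) and put `T 0 = 1`, `T 1 = t`, `T (j + 1) = Y · j / T (j - 1)`. Then
`Y i j = T (j - 1) i * T (j + 1) i`, and the Y-system turns into the unimodular rule
`T j (i - 1) * T j (i + 1) = T (j - 1) i * T (j + 1) i + 1` of a frieze bounded by zero rows
`j = -1` and `j = n + 2`. In such a frieze the north-east diagonal through `T 0 c` and the
south-east antidiagonal through `T (n + 1) (c + n + 3)` obey the same three-term recurrence, so
they are proportional (glide symmetry). Since `T (n + 1) (x - 1) * T (n + 1) (x + 1) = 1`, the
proportionality factors cancel in `T (j - 1) i * T (j + 1) i`.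
-/

theorem exists_int_seq_of_equiv {α : Type*} (e : ℤ → α ≃ α) (x : α) :
    ∃ p : ℤ → α, ∀ i, p (i + 1) = e i (p i) := by
  let p : ℤ → α := fun i => Int.inductionOn' (motive := fun _ => α) i 0 x
    (fun k _ y => e k y) (fun k _ y => (e (k - 1)).symm y)
  refine ⟨p, fun i => ?_⟩
  rcases le_or_gt 0 i with hi | hi
  · exact Int.inductionOn'_add_one hi
  · have h := Int.inductionOn'_sub_one (motive := fun _ => α) (zero := x)
      (succ := fun k _ y => e k y) (pred := fun k _ y => (e (k - 1)).symm y)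
      (show i + 1 ≤ 0 by omega)
    simp only [add_sub_cancel_right] at h
    simp only [p, h, Equiv.apply_symm_apply]

theorem exists_int_seq_mul_eq {G : Type*} [CommGroup G] (a : ℤ → G) :
    ∃ t : ℤ → G, ∀ i, t (i - 1) * t (i + 1) = a i := by
  -- `p i = (t (i - 1), t i)`
  let e : ℤ → G × G ≃ G × G := fun i =>
    { toFun := fun p => (p.2, a i * p.1⁻¹)
      invFun := fun p => (a i * p.2⁻¹, p.1)
      left_inv := fun p => by simp
      right_inv := fun p => by simp }
  obtain ⟨p, hp⟩ := exists_int_seq_of_equiv e 1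
  refine ⟨fun i => (p i).2, fun i => ?_⟩
  have h₁ : (p (i - 1 + 1)).1 = (p (i - 1)).2 := congrArg Prod.fst (hp (i - 1))
  rw [sub_add_cancel] at h₁
  have h₂ : (p (i + 1)).2 = a i * (p i).1⁻¹ := congrArg Prod.snd (hp i)
  simp only [h₂, h₁, mul_inv_cancel_comm_assoc]

theorem exists_int_seq_ne_zero_mul_eq {G₀ : Type*} [CommGroupWithZero G₀] (a : ℤ → G₀)
    (ha : ∀ i, a i ≠ 0) : ∃ t : ℤ → G₀, (∀ i, t i ≠ 0) ∧ ∀ i, t (i - 1) * t (i + 1) = a i := by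
  obtain ⟨t, ht⟩ := exists_int_seq_mul_eq fun i => Units.mk0 (a i) (ha i)
  exact ⟨fun i => t i, fun i => (t i).ne_zero, fun i => by simpa using congrArg Units.val (ht i)⟩

section Frieze

theorem eq_of_three_term_recurrence {R : Type*} [Ring R] {x y b : ℤ → R} {m : ℤ}
    (hx : ∀ k, 0 ≤ k → k < m → x (k + 1) = b k * x k - x (k - 1))
    (hy : ∀ k, 0 ≤ k → k < m → y (k + 1) = b k * y k - y (k - 1))
    (hneg : x (-1) = y (-1)) (h₀ : x 0 = y 0) {k : ℤ} (hk₁ : -1 ≤ k) (hk₂ : k ≤ m) :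
    x k = y k := by
  have key : ∀ k, 0 ≤ k → k ≤ m → x (k - 1) = y (k - 1) ∧ x k = y k := by
    intro k hk
    induction k, hk using Int.leInduction with
    | base => exact fun _ => ⟨hneg, h₀⟩
    | succ k hk ih =>
      intro hkm
      obtain ⟨e₁, e₂⟩ := ih (by omega)
      refine ⟨by rwa [add_sub_cancel_right], ?_⟩
      rw [hx k hk (by omega), hy k hk (by omega), e₁, e₂]
  obtain rfl | hk := eq_or_lt_of_le hk₁
  · exact hneg
  · exact (key k (by omega) hk₂).2

variable {R : Type*} [CommRing R]

structure IsFrieze (n : ℤ) (T : ℤ → ℤ → R) : Prop where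
  row_neg_one : ∀ i, T (-1) i = 0
  row_zero : ∀ i, T 0 i = 1
  row_top : ∀ i, T (n + 2) i = 0
  ne_zero : ∀ j i, 0 ≤ j → j ≤ n + 1 → T j i ≠ 0
  unimodular : ∀ j i, 0 ≤ j → j ≤ n + 1 →
    T j (i - 1) * T j (i + 1) = T (j - 1) i * T (j + 1) i + 1

namespace IsFrieze

variable {n : ℤ} {T : ℤ → ℤ → R}

theorem reflect (hT : IsFrieze n T) : IsFrieze n fun j i => T j (-i) where
  row_neg_one i := hT.row_neg_one _
  row_zero i := hT.row_zero _
  row_top i := hT.row_top _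
  ne_zero j i := hT.ne_zero j _
  unimodular j i h₀ h₁ := by
    rw [← hT.unimodular j (-i) h₀ h₁, mul_comm, neg_sub', neg_add', sub_neg_eq_add]

theorem diag_rec [IsDomain R] (hT : IsFrieze n T) {j : ℤ} (hj₀ : 0 ≤ j) (hj₁ : j ≤ n + 1)
    (i : ℤ) : T (j + 1) (i + 1) = T 1 (i + j + 1) * T j i - T (j - 1) (i - 1) := by
  induction j, hj₀ using Int.leInduction generalizing i with
  | base => simp [hT.row_neg_one, hT.row_zero]
  | succ j hj ih =>
    have e₁ := hT.unimodular j i hj (by omega)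
    have e₂ := hT.unimodular (j + 1) (i + 1) (by omega) hj₁
    have e₃ := ih (by omega) (i + 1)
    refine mul_left_cancel₀ (hT.ne_zero j (i + 1) hj (by omega)) ?_
    linear_combination (norm := ring_nf) e₁ - e₂ + T (j + 1) i * e₃

theorem antidiag_rec [IsDomain R] (hT : IsFrieze n T) {j : ℤ} (hj₀ : 0 ≤ j) (hj₁ : j ≤ n + 1)
    (i : ℤ) : T (j + 1) (i - 1) = T 1 (i - j - 1) * T j i - T (j - 1) (i + 1) := by
  have h := hT.reflect.diag_rec hj₀ hj₁ (-i)
  ring_nf at h ⊢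
  exact h

theorem glide [IsDomain R] (hT : IsFrieze n T) {k : ℤ} (hk₁ : -1 ≤ k) (hk₂ : k ≤ n + 2)
    (c : ℤ) : T (n + 1 - k) (c + n + 3 + k) = T (n + 1) (c + n + 3) * T k (c + k) := by
  refine eq_of_three_term_recurrence (x := fun k => T (n + 1 - k) (c + n + 3 + k))
    (y := fun k => T (n + 1) (c + n + 3) * T k (c + k)) (b := fun k => T 1 (c + 2 * k + 1))
    (m := n + 2) (fun k hk₀ hk => ?_) (fun k hk₀ hk => ?_) ?_ ?_ hk₁ hk₂
  · have h := hT.antidiag_rec (j := n + 1 - k) (by omega) (by omega) (c + n + 3 + k)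
    linear_combination (norm := ring_nf) h
  · have h := hT.diag_rec hk₀ (by omega) (c + k)
    linear_combination (norm := ring_nf) T (n + 1) (c + n + 3) * h
  · rw [hT.row_neg_one, mul_zero]
    convert hT.row_top (c + n + 2) using 2 <;> ring
  · simp [hT.row_zero]

theorem mul_periodic [IsDomain R] (hT : IsFrieze n T) {j : ℤ} (hj₁ : 1 ≤ j) (hj₂ : j ≤ n)
    (i : ℤ) : T (n + 1 - j - 1) (i + n + 3) * T (n + 1 - j + 1) (i + n + 3) =
      T (j - 1) i * T (j + 1) i := by
  have g₁ := hT.glide (k := j + 1) (by omega) (by omega) (i - j - 1)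
  have g₂ := hT.glide (k := j - 1) (by omega) (by omega) (i - j + 1)
  have hu := hT.unimodular (n + 1) (i - j + n + 3) (by omega) le_rfl
  rw [add_sub_cancel_right, add_assoc n 1 1, one_add_one_eq_two, hT.row_top, mul_zero,
    zero_add] at hu
  linear_combination (norm := ring_nf) T (n + 1 - j + 1) (i + n + 3) * g₁
    + T (n + 1) (i - j + n + 2) * T (j + 1) i * g₂ + T (j - 1) i * T (j + 1) i * hu

end IsFrieze

end Frieze

section YSystem

variable {K : Type*} [Field K]

structure IsYSystem (n : ℤ) (Y : ℤ → ℤ → K) : Prop where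
  boundary : ∀ i, Y i 0 = 0 ∧ Y i (n + 1) = 0
  ne_zero : ∀ i j, 1 ≤ j → j ≤ n → Y i j ≠ 0
  one_add_ne_zero : ∀ i j, 1 ≤ j → j ≤ n → 1 + Y i j ≠ 0
  rel : ∀ i j, 1 ≤ j → j ≤ n →
    Y (i - 1) j * Y (i + 1) j = (1 + Y i (j - 1)) * (1 + Y i (j + 1))

def friezeOf (Y : ℤ → ℤ → K) (t : ℤ → K) (j i : ℤ) : K :=
  if j < 0 then 0 else if j = 0 then 1 else if j = 1 then t i
  else Y i (j - 1) / friezeOf Y t (j - 2) i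
termination_by j.toNat

section

variable (Y : ℤ → ℤ → K) (t : ℤ → K) (i : ℤ)

@[simp] theorem friezeOf_neg_one : friezeOf Y t (-1) i = 0 := by
  rw [friezeOf]; simp

@[simp] theorem friezeOf_zero : friezeOf Y t 0 i = 1 := by
  rw [friezeOf]; simp

@[simp] theorem friezeOf_one : friezeOf Y t 1 i = t i := by
  rw [friezeOf]; simp

theorem friezeOf_add_two {j : ℤ} (hj : 0 ≤ j) :
    friezeOf Y t (j + 2) i = Y i (j + 1) / friezeOf Y t j i := by
  rw [friezeOf, if_neg (by omega), if_neg (by omega), if_neg (by omega)]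
  ring_nf

end

namespace IsYSystem

variable {n : ℤ} {Y : ℤ → ℤ → K} {t : ℤ → K}

theorem one_add_ne_zero' (hY : IsYSystem n Y) (i : ℤ) {j : ℤ} (hj₀ : 0 ≤ j) (hj : j ≤ n) :
    1 + Y i j ≠ 0 := by
  obtain rfl | hj₀ := eq_or_lt_of_le hj₀
  · simp [(hY.boundary i).1]
  · exact hY.one_add_ne_zero i j hj₀ hj

theorem friezeOf_ne_zero (hY : IsYSystem n Y) (ht : ∀ i, t i ≠ 0) {j : ℤ} (hj₀ : 0 ≤ j)
    (hj : j ≤ n + 1) (i : ℤ) : friezeOf Y t j i ≠ 0 := by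
  rcases (by omega : j = 0 ∨ j = 1 ∨ 2 ≤ j) with rfl | rfl | h
  · simp
  · simpa using ht i
  · obtain ⟨j, rfl⟩ : ∃ j', j = j' + 2 := ⟨j - 2, by omega⟩
    rw [friezeOf_add_two _ _ _ (by omega)]
    exact div_ne_zero (hY.ne_zero i (j + 1) (by omega) (by omega))
      (hY.friezeOf_ne_zero ht (by omega) (by omega) i)
termination_by j.toNat
decreasing_by omega

theorem eq_friezeOf_mul (hY : IsYSystem n Y) (ht : ∀ i, t i ≠ 0) {j : ℤ} (hj₁ : 1 ≤ j)
    (hj : j ≤ n + 1) (i : ℤ) : Y i j = friezeOf Y t (j - 1) i * friezeOf Y t (j + 1) i := by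
  obtain ⟨j, rfl⟩ : ∃ j', j = j' + 1 := ⟨j - 1, by omega⟩
  rw [add_sub_cancel_right, add_assoc, one_add_one_eq_two, friezeOf_add_two _ _ _ (by omega),
    mul_div_cancel₀ _ (hY.friezeOf_ne_zero ht (by omega) (by omega) i)]

theorem friezeOf_mul_friezeOf (hY : IsYSystem n Y) (ht : ∀ i, t i ≠ 0)
    (htY : ∀ i, t (i - 1) * t (i + 1) = 1 + Y i 1) {j : ℤ} (hj₀ : 0 ≤ j) (hj : j ≤ n + 1)
    (i : ℤ) : friezeOf Y t j (i - 1) * friezeOf Y t j (i + 1) = 1 + Y i j := by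
  rcases (by omega : j = 0 ∨ j = 1 ∨ 2 ≤ j) with rfl | rfl | h
  · simp [(hY.boundary i).1]
  · simpa using htY i
  · obtain ⟨j, rfl⟩ : ∃ j', j = j' + 2 := ⟨j - 2, by omega⟩
    have ih := hY.friezeOf_mul_friezeOf ht htY (j := j) (by omega) (by omega) i
    have hrel := hY.rel i (j + 1) (by omega) (by omega)
    rw [friezeOf_add_two _ _ _ (by omega), friezeOf_add_two _ _ _ (by omega), div_mul_div_comm,
      ih, div_eq_iff (hY.one_add_ne_zero' i (by omega) (by omega)), hrel]
    ring_nf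
termination_by j.toNat
decreasing_by omega

theorem isFrieze_friezeOf (hY : IsYSystem n Y) (hn : 0 ≤ n) (ht : ∀ i, t i ≠ 0)
    (htY : ∀ i, t (i - 1) * t (i + 1) = 1 + Y i 1) : IsFrieze n (friezeOf Y t) where
  row_neg_one := friezeOf_neg_one Y t
  row_zero := friezeOf_zero Y t
  row_top i := by rw [friezeOf_add_two _ _ _ hn, (hY.boundary i).2, zero_div]
  ne_zero _ i hj₀ hj := hY.friezeOf_ne_zero ht hj₀ hj i
  unimodular j i hj₀ hj := by
    obtain rfl | hj₁ := eq_or_lt_of_le hj₀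
    · simp
    · rw [hY.friezeOf_mul_friezeOf ht htY hj₀ hj, hY.eq_friezeOf_mul ht hj₁ hj, add_comm]

end IsYSystem

end YSystem

/-- Periodicity of the (A_n, A_1) Y-system:
if `Y(i,j)` for `i ∈ ℤ`, `1 ≤ j ≤ n` (with `Y(i,0) = Y(i,n+1) = 0`) satisfy
`Y(i-1,j) Y(i+1,j) = (1 + Y(i,j-1))(1 + Y(i,j+1))`, with all `Y(i,j)` and `1 + Y(i,j)`
nonzero for `1 ≤ j ≤ n`, then `Y(i,j) = Y(i+n+3, n+1-j)`. -/
theorem y_system_periodicity {K : Type*} [Field K] (n : ℤ) (hn : 1 ≤ n)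
    (Y : ℤ → ℤ → K)
    (hb : ∀ i, Y i 0 = 0 ∧ Y i (n + 1) = 0)
    (hnz : ∀ i j, 1 ≤ j → j ≤ n → Y i j ≠ 0)
    (hnz' : ∀ i j, 1 ≤ j → j ≤ n → 1 + Y i j ≠ 0)
    (hsys : ∀ i j, 1 ≤ j → j ≤ n →
      Y (i - 1) j * Y (i + 1) j = (1 + Y i (j - 1)) * (1 + Y i (j + 1))) :
    ∀ i j, 1 ≤ j → j ≤ n → Y i j = Y (i + n + 3) (n + 1 - j) := by
  intro i j hj₁ hj₂
  have hY : IsYSystem n Y := ⟨hb, hnz, hnz', hsys⟩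
  obtain ⟨t, ht, htY⟩ :=
    exists_int_seq_ne_zero_mul_eq (fun i => 1 + Y i 1) fun i => hnz' i 1 le_rfl hn
  have hT := hY.isFrieze_friezeOf (by omega) ht htY
  rw [hY.eq_friezeOf_mul ht hj₁ (by omega), hY.eq_friezeOf_mul ht (j := n + 1 - j) (by omega)
    (by omega)]
  exact (hT.mul_periodic hj₁ hj₂ i).symm
end

section
/- For each j with 0 ≤ j ≤ n, the values b_j = (1 - a_1 a_2 ⋯ a_j)/(1 - a_1 a_2 ⋯ a_{j+1}) (with a_{n+1} = 0 and empty product 1) satisfy the recursion ((1 - b_{j-1})/b_{j-1})·(a_1⋯a_j(1-a_{j+1})/(1 - a_1⋯a_j)) = (a_{j+1} - 1)·(a_1⋯a_{j-1}(a_j - 1)/(1 - a_1⋯a_j)), equivalently they satisfy the X-system relation (1 - 1/b_{j-1})(1 - 1/X(j+2,j)) = (1 - a_j)(1 - a_{j+1}) with b_{j-1} = X(j+1,j-1) and a_j = X(j,j). -/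
/-!
Write `P = a₁⋯a_{j-1}`, `x = a_j`, `y = a_{j+1}`, so that `a₁⋯a_j = P x` and
`a₁⋯a_{j+1} = P x y`. Both relations are then rational identities in `P, x, y`, valid as soon
as `x ≠ 0` and `1 - P x ≠ 0`. The value `b_j` may vanish (e.g. when `a₁⋯a_{j+1} = 1`), but
`1 / b_j = (1 - P x y) / (1 - P x)` holds regardless, by `1 / (u / v) = v / u` in a field.
-/

/-- The values `b j = (1 - a₁⋯a_j)/(1 - a₁⋯a_{j+1})` (with `a_{n+1} = 0`, empty product 1). -/
noncomputable def diagValue {K : Type*} [Field K] (a : ℤ → K) (j : ℤ) : K :=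
  (1 - ∏ k ∈ Finset.Icc 1 j, a k) / (1 - ∏ k ∈ Finset.Icc 1 (j + 1), a k)

theorem Finset.prod_Icc_eq_prod_Icc_sub_one_mul {M : Type*} [CommMonoid M] (f : ℤ → M)
    {m j : ℤ} (h : m ≤ j) : ∏ k ∈ Icc m j, f k = (∏ k ∈ Icc m (j - 1), f k) * f j := by
  rw [← insert_Icc_sub_one_right_eq_Icc h, prod_insert (by simp), mul_comm]

theorem Finset.prod_Icc_add_one_eq_prod_Icc_mul {M : Type*} [CommMonoid M] (f : ℤ → M)
    {m j : ℤ} (h : m ≤ j + 1) : ∏ k ∈ Icc m (j + 1), f k = (∏ k ∈ Icc m j, f k) * f (j + 1) := by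
  rw [prod_Icc_eq_prod_Icc_sub_one_mul f h, add_sub_cancel_right]

theorem one_div_diagValue {K : Type*} [Field K] (a : ℤ → K) (j : ℤ) :
    1 / diagValue a j = (1 - ∏ k ∈ Finset.Icc 1 (j + 1), a k) / (1 - ∏ k ∈ Finset.Icc 1 j, a k) :=
  one_div_div _ _

theorem diagValue_sub_one {K : Type*} [Field K] (a : ℤ → K) (j : ℤ) :
    diagValue a (j - 1) =
      (1 - ∏ k ∈ Finset.Icc 1 (j - 1), a k) / (1 - ∏ k ∈ Finset.Icc 1 j, a k) := by
  rw [diagValue, sub_add_cancel]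

section Identities

variable {K : Type*} [Field K] {P x : K}

theorem recursion_identity (y : K) (hx : x ≠ 0) :
    ((1 - x) / x) * (P * x * (1 - y) / (1 - P * x)) = (y - 1) * (P * (x - 1) / (1 - P * x)) := by
  field_simp
  ring

theorem xSystem_identity (y : K) (hx : x ≠ 0) (hPx : 1 - P * x ≠ 0) :
    (1 - 1 / x) * (1 - (1 - P * x * y) / (1 - P * x)) =
      (1 - (1 - P) / (1 - P * x)) * (1 - y) := by
  rw [one_sub_div hPx, one_sub_div hPx, one_sub_div hx]
  field_simp
  ring

end Identities

theorem diag_recursion_general {K : Type*} [Field K] (n : ℤ) (a : ℤ → K)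
    (ha : ∀ j, 1 ≤ j → j ≤ n → a j ≠ 0)
    (hP : ∀ j, 1 ≤ j → j ≤ n → (∏ k ∈ Finset.Icc 1 j, a k) ≠ 1) :
    ∀ j, 1 ≤ j → j ≤ n →
      ((1 - a j) / a j) *
          ((∏ k ∈ Finset.Icc 1 j, a k) * (1 - a (j + 1)) / (1 - ∏ k ∈ Finset.Icc 1 j, a k))
        = (a (j + 1) - 1) *
          ((∏ k ∈ Finset.Icc 1 (j - 1), a k) * (a j - 1) / (1 - ∏ k ∈ Finset.Icc 1 j, a k)) ∧
      (1 - 1 / a j) * (1 - 1 / diagValue a j)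
        = (1 - diagValue a (j - 1)) * (1 - a (j + 1)) := by
  intro j hj hjn
  have hprod_j := Finset.prod_Icc_eq_prod_Icc_sub_one_mul a hj
  have hprod_succ := Finset.prod_Icc_add_one_eq_prod_Icc_mul a (m := 1) (j := j) (by omega)
  have hPx : 1 - ∏ k ∈ Finset.Icc 1 j, a k ≠ 0 := sub_ne_zero.mpr (hP j hj hjn).symm
  rw [hprod_j] at hPx hprod_succ
  refine ⟨?_, ?_⟩
  · rw [hprod_j]
    exact recursion_identity _ (ha j hj hjn)
  · rw [one_div_diagValue, diagValue_sub_one, hprod_succ, hprod_j]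
    exact xSystem_identity _ (ha j hj hjn) hPx

/-- The values `b_j = (1 - a₁⋯a_j)/(1 - a₁⋯a_{j+1})` satisfy the recursion
`((1-a_j)/a_j)·(a₁⋯a_j(1-a_{j+1})/(1-a₁⋯a_j)) = (a_{j+1}-1)·(a₁⋯a_{j-1}(a_j-1)/(1-a₁⋯a_j))`,
equivalently they satisfy the X-system relation
`(1 - 1/X(j,j))(1 - 1/X(j+2,j)) = (1 - X(j+1,j-1))(1 - X(j+1,j+1))` with
`X(j+2,j) = b_j`, `X(j+1,j-1) = b_{j-1}`, `X(j,j) = a_j`, `X(j+1,j+1) = a_{j+1}`. -/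
theorem diag_recursion {K : Type*} [Field K] (n : ℤ) (hn : 1 ≤ n) (a : ℤ → K)
    (han : a (n + 1) = 0)
    (ha : ∀ j, 1 ≤ j → j ≤ n → a j ≠ 0)
    (hP : ∀ j, 1 ≤ j → j ≤ n → (∏ k ∈ Finset.Icc 1 j, a k) ≠ 1) :
    ∀ j, 1 ≤ j → j ≤ n →
      ((1 - a j) / a j) *
          ((∏ k ∈ Finset.Icc 1 j, a k) * (1 - a (j + 1)) / (1 - ∏ k ∈ Finset.Icc 1 j, a k))
        = (a (j + 1) - 1) *
          ((∏ k ∈ Finset.Icc 1 (j - 1), a k) * (a j - 1) / (1 - ∏ k ∈ Finset.Icc 1 j, a k)) ∧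
      (1 - 1 / a j) * (1 - 1 / diagValue a j)
        = (1 - diagValue a (j - 1)) * (1 - a (j + 1)) :=
  diag_recursion_general n a ha hP
end

section
/- Let C be the multiplicative group of nowhere vanishing continuously differentiable functions from [0,1] to (0,∞). Let f_1,...,f_N : [0,1] → (0,1) be continuously differentiable functions such that the element ∑_{i=1}^N f_i ⊗ (1 - f_i) of C ⊗_ℤ C lies in the subgroup S²C generated by elements of the form g ⊗ h + h ⊗ g. Then the function x ↦ ∑_{i=1}^N L(f_i(x)) is constant on [0,1], where L is the Rogers dilogarithm. -/
open TensorProduct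

/-- The Rogers dilogarithm on `[0,1]`. -/
noncomputable def rogersL (z : ℝ) : ℝ :=
  -(1 / 2) * ∫ t in (0:ℝ)..z, (Real.log (1 - t) / t + Real.log t / (1 - t))

/-- The multiplicative group `C` of nowhere vanishing continuously differentiable functions
from `[0,1]` to `(0,∞)` (as a subgroup of the group of `ℝˣ`-valued functions on `[0,1]`). -/
def posC1 : Subgroup (↥(Set.Icc (0:ℝ) 1) → ℝˣ) where
  carrier := {f | (∀ x, 0 < ((f x : ℝˣ) : ℝ)) ∧
    ∃ F : ℝ → ℝ, ContDiffOn ℝ 1 F (Set.Icc 0 1) ∧ ∀ x : ↥(Set.Icc (0:ℝ) 1), F x = f x}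
  one_mem' := ⟨fun x => by simp, fun _ => 1, contDiffOn_const, fun x => by simp⟩
  mul_mem' := by
    rintro f g ⟨hf, F, hF, hFv⟩ ⟨hg, G, hG, hGv⟩
    refine ⟨fun x => by simpa using mul_pos (hf x) (hg x), F * G, hF.mul hG, fun x => ?_⟩
    simp [hFv x, hGv x]
  inv_mem' := by
    rintro f ⟨hf, F, hF, hFv⟩
    refine ⟨fun x => by simpa using inv_pos.mpr (hf x), F⁻¹,
      hF.inv (fun x hx => ?_), fun x => ?_⟩
    · rw [show F x = ((f ⟨x, hx⟩ : ℝˣ) : ℝ) from hFv ⟨x, hx⟩]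
      exact (f ⟨x, hx⟩).ne_zero
    · simp [hFv x]

/-- The subgroup `S²C ⊂ C ⊗_ℤ C` generated by symmetric tensors `a ⊗ b + b ⊗ a`. -/
noncomputable def sq2C :
    AddSubgroup (TensorProduct ℤ (Additive ↥posC1) (Additive ↥posC1)) :=
  AddSubgroup.closure
    {t | ∃ a b : Additive ↥posC1, t = a ⊗ₜ[ℤ] b + b ⊗ₜ[ℤ] a}

/-!
Write `f = F` and `1 - f = G` on `[0,1]`. By the chain rule,
`(L ∘ f)' = ½ (log f · (log (1 - f))' - log (1 - f) · (log f)')`,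
which is the value on `f ⊗ (1 - f)` of the homomorphism `C ⊗ C → ℝ` induced by the
antisymmetric pairing `(a, b) ↦ log a(x) · (log b)'(x) - log b(x) · (log a)'(x)`.
Antisymmetry kills `S²C`, so `∑ᵢ L ∘ fᵢ` has zero derivative on `[0,1]` and is constant.
-/

open Set Real MeasureTheory

lemma abs_log_one_sub_div_le {t : ℝ} (ht0 : 0 < t) (ht1 : t < 1) :
    |log (1 - t) / t| ≤ 1 / (1 - t) := by
  have h1t : 0 < 1 - t := by linarith
  have hupper : log (1 - t) ≤ 0 := log_nonpos h1t.le (by linarith)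
  have hlower : 1 - (1 - t)⁻¹ ≤ log (1 - t) := one_sub_inv_le_log_of_pos h1t
  rw [abs_div, abs_of_nonpos hupper, abs_of_pos ht0, div_le_div_iff₀ ht0 h1t]
  have : 1 - (1 - t)⁻¹ = -(t / (1 - t)) := by field_simp; ring
  rw [this, neg_le] at hlower
  linarith [(le_div_iff₀ h1t).1 hlower]

lemma intervalIntegrable_log_one_sub_div {z : ℝ} (hz0 : 0 ≤ z) (hz1 : z < 1) :
    IntervalIntegrable (fun t => log (1 - t) / t) volume 0 z := by
  refine (intervalIntegrable_const (c := 1 / (1 - z))).mono_fun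
    (by fun_prop : Measurable _).aestronglyMeasurable ?_
  rw [uIoc_of_le hz0]
  refine (ae_restrict_iff' measurableSet_Ioc).2 (Filter.Eventually.of_forall fun t ht => ?_)
  dsimp only
  rw [Real.norm_eq_abs, Real.norm_eq_abs, abs_of_pos (one_div_pos.2 (sub_pos.2 hz1))]
  refine (abs_log_one_sub_div_le ht.1 (by linarith [ht.2])).trans ?_
  exact one_div_le_one_div_of_le (sub_pos.2 hz1) (by linarith [ht.2])

lemma intervalIntegrable_log_div_one_sub {z : ℝ} (hz0 : 0 ≤ z) (hz1 : z < 1) :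
    IntervalIntegrable (fun t => log t / (1 - t)) volume 0 z := by
  simp_rw [div_eq_mul_inv]
  refine intervalIntegral.intervalIntegrable_log'.mul_continuousOn ?_
  rw [uIcc_of_le hz0]
  exact (continuousOn_const.sub continuousOn_id : ContinuousOn (fun t : ℝ => 1 - t) _).inv₀
    fun t ht => (sub_pos.2 (by linarith [ht.2])).ne'

lemma hasDerivAt_rogersL {z : ℝ} (hz : z ∈ Ioo (0 : ℝ) 1) :
    HasDerivAt rogersL (-(1 / 2) * (log (1 - z) / z + log z / (1 - z))) z := by
  obtain ⟨hz0, hz1⟩ := hz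
  have hcont : ContinuousOn (fun t => log (1 - t) / t + log t / (1 - t)) (Ioo 0 1) := by
    intro t ht
    have ht0 : t ≠ 0 := ht.1.ne'
    have ht1 : 1 - t ≠ 0 := by linarith [ht.2]
    fun_prop (disch := assumption)
  refine (intervalIntegral.integral_hasDerivAt_right ?_ ?_ ?_).const_mul _
  · exact (intervalIntegrable_log_one_sub_div hz0.le hz1).add
      (intervalIntegrable_log_div_one_sub hz0.le hz1)
  · exact hcont.stronglyMeasurableAtFilter isOpen_Ioo z ⟨hz0, hz1⟩
  · exact hcont.continuousAt (Ioo_mem_nhds hz0 hz1)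

theorem hasDerivWithinAt_rogersL_comp {f : ℝ → ℝ} {f' x : ℝ} {s : Set ℝ}
    (hf : HasDerivWithinAt f f' s x) (hx : f x ∈ Ioo (0 : ℝ) 1) :
    HasDerivWithinAt (fun y => rogersL (f y))
      ((log (f x) * (-f' / (1 - f x)) - log (1 - f x) * (f' / f x)) / 2) s x :=
  ((hasDerivAt_rogersL hx).comp_hasDerivWithinAt x hf).congr_deriv (by ring)

section Wedge

variable {R M : Type*} [CommRing R] [AddCommGroup M]

def wedgeForm (ℓ δ : M →+ R) : M →ₗ[ℤ] M →ₗ[ℤ] R :=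
  LinearMap.mk₂ ℤ (fun a b => ℓ a * δ b - ℓ b * δ a)
    (fun a a' b => by simp only [map_add]; ring)
    (fun n a b => by simp only [map_zsmul, zsmul_eq_mul]; ring)
    (fun a b b' => by simp only [map_add]; ring)
    (fun n a b => by simp only [map_zsmul, zsmul_eq_mul]; ring)

lemma wedgeForm_apply (ℓ δ : M →+ R) (a b : M) :
    wedgeForm ℓ δ a b = ℓ a * δ b - ℓ b * δ a := rfl

lemma wedgeForm_add_swap (ℓ δ : M →+ R) (a b : M) :
    wedgeForm ℓ δ a b + wedgeForm ℓ δ b a = 0 := by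
  simp only [wedgeForm_apply]
  ring

end Wedge

theorem TensorProduct.lift_eq_zero_of_mem_closure_symm {R M N : Type*} [CommRing R]
    [AddCommGroup M] [Module R M] [AddCommGroup N] [Module R N]
    (B : M →ₗ[R] M →ₗ[R] N) (hB : ∀ a b, B a b + B b a = 0) {w : M ⊗[R] M}
    (hw : w ∈ AddSubgroup.closure {t | ∃ a b : M, t = a ⊗ₜ[R] b + b ⊗ₜ[R] a}) :
    lift B w = 0 := by
  induction hw using AddSubgroup.closure_induction with
  | mem t ht =>
    obtain ⟨a, b, rfl⟩ := ht
    simpa using hB a b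
  | zero => exact map_zero _
  | add _ _ _ _ h h' => rw [map_add, h, h', add_zero]
  | neg _ _ h => rw [map_neg, h, neg_zero]

namespace posC1

def toFun (g : posC1) (x : Icc (0 : ℝ) 1) : ℝ := ((g : Icc (0 : ℝ) 1 → ℝˣ) x : ℝˣ)

lemma toFun_pos (g : posC1) (x : Icc (0 : ℝ) 1) : 0 < toFun g x := g.2.1 x

lemma differentiableOn_of_toFun_eq {g : posC1} {φ : ℝ → ℝ}
    (hg : ∀ x : Icc (0 : ℝ) 1, toFun g x = φ x) :
    DifferentiableOn ℝ φ (Icc 0 1) := by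
  obtain ⟨ψ, hψ, hψg⟩ := g.2.2
  exact (hψ.differentiableOn one_ne_zero).congr fun x hx =>
    (hg ⟨x, hx⟩).symm.trans (hψg ⟨x, hx⟩).symm

/-- `log g`, extended by `0` outside `[0,1]` so that `derivWithin` on `[0,1]` applies to it. -/
noncomputable def logExt (g : posC1) (t : ℝ) : ℝ :=
  if h : t ∈ Icc (0 : ℝ) 1 then log (toFun g ⟨t, h⟩) else 0

lemma logExt_mul (g h : posC1) (t : ℝ) : logExt (g * h) t = logExt g t + logExt h t := by
  unfold logExt
  split_ifs with ht
  · exact log_mul (toFun_pos g _).ne' (toFun_pos h _).ne'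
  · ring

lemma logExt_eqOn {g : posC1} {φ : ℝ → ℝ}
    (hg : ∀ x : Icc (0 : ℝ) 1, toFun g x = φ x) :
    EqOn (logExt g) (fun t => log (φ t)) (Icc 0 1) := fun t ht => by
  simp only [logExt, dif_pos ht, hg ⟨t, ht⟩]

lemma hasDerivWithinAt_logExt {g : posC1} {φ : ℝ → ℝ}
    (hg : ∀ x : Icc (0 : ℝ) 1, toFun g x = φ x) {φ' x : ℝ}
    (hφ : HasDerivWithinAt φ φ' (Icc 0 1) x) (hx : x ∈ Icc (0 : ℝ) 1) :
    HasDerivWithinAt (logExt g) (φ' / φ x) (Icc 0 1) x := by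
  have hpos : 0 < φ x := hg ⟨x, hx⟩ ▸ toFun_pos g ⟨x, hx⟩
  exact (hφ.log hpos.ne').congr_of_mem (logExt_eqOn hg) hx

lemma differentiableWithinAt_logExt (g : posC1) (x : ℝ) :
    DifferentiableWithinAt ℝ (logExt g) (Icc 0 1) x := by
  by_cases hx : x ∈ Icc (0 : ℝ) 1
  · obtain ⟨φ, hφ, hφg⟩ := g.2.2
    exact (hasDerivWithinAt_logExt (fun y => (hφg y).symm)
      ((hφ.differentiableOn one_ne_zero x hx).hasDerivWithinAt) hx).differentiableWithinAt
  · exact (HasFDerivWithinAt.of_notMem_closure (f' := 0)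
      (by rwa [closure_Icc])).differentiableWithinAt

noncomputable def logAt (x : ℝ) : Additive posC1 →+ ℝ :=
  AddMonoidHom.mk' (fun g => logExt g.toMul x) fun _ _ => logExt_mul _ _ x

noncomputable def logDerivAt (x : ℝ) : Additive posC1 →+ ℝ :=
  AddMonoidHom.mk' (fun g => derivWithin (logExt g.toMul) (Icc 0 1) x) fun a b => by
    have hadd : logExt (a + b).toMul = fun t => logExt a.toMul t + logExt b.toMul t :=
      funext (logExt_mul _ _)
    rw [hadd, derivWithin_fun_add (differentiableWithinAt_logExt _ x)
      (differentiableWithinAt_logExt _ x)]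

lemma logAt_ofMul {g : posC1} {φ : ℝ → ℝ}
    (hg : ∀ x : Icc (0 : ℝ) 1, toFun g x = φ x) {x : ℝ}
    (hx : x ∈ Icc (0 : ℝ) 1) : logAt x (Additive.ofMul g) = log (φ x) :=
  logExt_eqOn hg hx

lemma logDerivAt_ofMul {g : posC1} {φ : ℝ → ℝ}
    (hg : ∀ x : Icc (0 : ℝ) 1, toFun g x = φ x) {φ' x : ℝ}
    (hφ : HasDerivWithinAt φ φ' (Icc 0 1) x) (hx : x ∈ Icc (0 : ℝ) 1) :
    logDerivAt x (Additive.ofMul g) = φ' / φ x :=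
  (hasDerivWithinAt_logExt hg hφ hx).derivWithin (uniqueDiffOn_Icc zero_lt_one x hx)

theorem hasDerivWithinAt_rogersL {a b : posC1} {f : ℝ → ℝ}
    (ha : ∀ x : Icc (0 : ℝ) 1, toFun a x = f x)
    (hb : ∀ x : Icc (0 : ℝ) 1, toFun b x = 1 - f x)
    {x : ℝ} (hx : x ∈ Icc (0 : ℝ) 1) :
    HasDerivWithinAt (fun y => rogersL (f y))
      (wedgeForm (logAt x) (logDerivAt x) (Additive.ofMul a) (Additive.ofMul b) / 2)
      (Icc 0 1) x := by
  have hf := (differentiableOn_of_toFun_eq ha x hx).hasDerivWithinAt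
  have hfx : f x ∈ Ioo (0 : ℝ) 1 :=
    ⟨ha ⟨x, hx⟩ ▸ toFun_pos a ⟨x, hx⟩, sub_pos.1 (hb ⟨x, hx⟩ ▸ toFun_pos b ⟨x, hx⟩)⟩
  rw [wedgeForm_apply, logAt_ofMul ha hx, logAt_ofMul (φ := fun t => 1 - f t) hb hx,
    logDerivAt_ofMul ha hf hx, logDerivAt_ofMul hb (hf.const_sub 1) hx]
  exact hasDerivWithinAt_rogersL_comp hf hfx

end posC1

theorem rogers_sum_constant_general (N : ℕ) (f : Fin N → ℝ → ℝ)
    (F G : Fin N → ↥posC1)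
    (hF : ∀ i (x : ↥(Set.Icc (0:ℝ) 1)), (((F i : ↥(Set.Icc (0:ℝ) 1) → ℝˣ) x : ℝˣ) : ℝ) = f i x)
    (hG : ∀ i (x : ↥(Set.Icc (0:ℝ) 1)),
      (((G i : ↥(Set.Icc (0:ℝ) 1) → ℝˣ) x : ℝˣ) : ℝ) = 1 - f i x)
    (hten : (∑ i, Additive.ofMul (F i) ⊗ₜ[ℤ] Additive.ofMul (G i)) ∈ sq2C) :
    ∀ x ∈ Set.Icc (0:ℝ) 1, ∀ y ∈ Set.Icc (0:ℝ) 1,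
      ∑ i, rogersL (f i x) = ∑ i, rogersL (f i y) := by
  have hderiv : ∀ x ∈ Icc (0 : ℝ) 1,
      HasDerivWithinAt (fun t => ∑ i, rogersL (f i t)) 0 (Icc 0 1) x := by
    intro x hx
    have hsum := HasDerivWithinAt.fun_sum (u := Finset.univ) fun i _ =>
      posC1.hasDerivWithinAt_rogersL (hF i) (hG i) hx
    have hzero := lift_eq_zero_of_mem_closure_symm _
      (wedgeForm_add_swap (posC1.logAt x) (posC1.logDerivAt x)) hten
    simp only [map_sum, lift.tmul] at hzero
    rwa [← Finset.sum_div, hzero, zero_div] at hsum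
  have hconst := constant_of_derivWithin_zero (fun x hx => (hderiv x hx).differentiableWithinAt)
    fun x hx => (hderiv x (Ico_subset_Icc_self hx)).derivWithin
      (uniqueDiffOn_Icc zero_lt_one x (Ico_subset_Icc_self hx))
  intro x hx y hy
  rw [hconst x hx, hconst y hy]

/-- If `f₁, …, f_N : [0,1] → (0,1)` are continuously differentiable and
`∑ᵢ fᵢ ⊗ (1 − fᵢ) ∈ S²C` in `C ⊗_ℤ C`, then `x ↦ ∑ᵢ L(fᵢ(x))` is constant on `[0,1]`. -/
theorem rogers_sum_constant (N : ℕ) (f : Fin N → ℝ → ℝ)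
    (hf : ∀ i, ContDiffOn ℝ 1 (f i) (Set.Icc 0 1))
    (hrange : ∀ i, ∀ x ∈ Set.Icc (0:ℝ) 1, 0 < f i x ∧ f i x < 1)
    (F G : Fin N → ↥posC1)
    (hF : ∀ i (x : ↥(Set.Icc (0:ℝ) 1)), (((F i : ↥(Set.Icc (0:ℝ) 1) → ℝˣ) x : ℝˣ) : ℝ) = f i x)
    (hG : ∀ i (x : ↥(Set.Icc (0:ℝ) 1)),
      (((G i : ↥(Set.Icc (0:ℝ) 1) → ℝˣ) x : ℝˣ) : ℝ) = 1 - f i x)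
    (hten : (∑ i, Additive.ofMul (F i) ⊗ₜ[ℤ] Additive.ofMul (G i)) ∈ sq2C) :
    ∀ x ∈ Set.Icc (0:ℝ) 1, ∀ y ∈ Set.Icc (0:ℝ) 1,
      ∑ i, rogersL (f i x) = ∑ i, rogersL (f i y) :=
  rogers_sum_constant_general N f F G hF hG hten
end

section
/- For each n ≥ 1 and each i ∈ ℤ, the numbers X(i,j)₀ = 1 − sin²(π/(n+3))/sin²(π(j+1)/(n+3)) for 1 ≤ j ≤ n (constant in i), together with X(i,0)₀ = X(i,n+1)₀ = 0, satisfy the constant X-system: X(i,j)₀² = ∏_{l=1}^n (1 − X(i,l)₀)^{A_{jl}}, where (A_{jl}) is the A_n Cartan matrix, equivalently X(i,j)₀² = (1 − X(i,j−1)₀)(1 − X(i,j+1)₀); moreover each X(i,j)₀ ∈ (0,1). -/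
/-!
With `θ = π/(n+3)` and `s_k = sin (kθ)` we have `x_j = 1 - s_1²/s_{j+1}²`, so
`1 - x_j = s_1²/s_{j+1}²` and, by `sin (a - b) sin (a + b) = sin² a - sin² b`,
`x_j = (s_{j+1}² - s_1²)/s_{j+1}² = s_j s_{j+2}/s_{j+1}²`.
Hence `1 - 1/x_j = -s_1²/(s_j s_{j+2})`, whose square is `(1 - x_{j-1})(1 - x_{j+1})`.
The boundary values vanish because `s_{n+2} = sin (π - θ) = s_1`, and `0 < x_j < 1`
because `0 < s_1 < s_{j+1}` for `1 ≤ j ≤ n`.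
-/

open Real

lemma sin_sub_mul_sin_add (a b : ℝ) : sin (a - b) * sin (a + b) = sin a ^ 2 - sin b ^ 2 := by
  rw [sin_sub, sin_add]
  nlinarith [sin_sq_add_cos_sq a, sin_sq_add_cos_sq b]

lemma sin_nat_mul_mul_sin_nat_add_two_mul (θ : ℝ) (k : ℕ) :
    sin (k * θ) * sin ((k + 2 : ℕ) * θ) = sin ((k + 1 : ℕ) * θ) ^ 2 - sin θ ^ 2 := by
  convert sin_sub_mul_sin_add ((k + 1 : ℕ) * θ) θ using 3 <;> push_cast <;> ring

lemma sin_lt_sin_of_lt_of_lt_pi_sub {θ t : ℝ} (hθ : -(π / 2) ≤ θ) (hθt : θ < t)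
    (htθ : t < π - θ) : sin θ < sin t := by
  rcases le_or_gt t (π / 2) with ht | ht
  · exact sin_lt_sin_of_lt_of_le_pi_div_two hθ ht hθt
  · rw [← sin_pi_sub t]
    exact sin_lt_sin_of_lt_of_le_pi_div_two hθ (by linarith) (by linarith)

lemma sin_nat_mul_pi_div_pos {N : ℝ} {k : ℕ} (hk : 0 < k) (hkN : k < N) :
    0 < sin (k * (π / N)) := by
  have hN : 0 < N := lt_trans (by exact_mod_cast hk) hkN
  apply sin_pos_of_pos_of_lt_pi (by positivity)
  rw [mul_div_left_comm, mul_lt_iff_lt_one_right pi_pos, div_lt_one hN]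
  exact hkN

lemma sin_pi_div_lt_sin_nat_mul_pi_div {N : ℝ} {k : ℕ} (hk : 1 < k) (hkN : k + 1 < N) :
    sin (π / N) < sin (k * (π / N)) := by
  have hk' : (1 : ℝ) < k := by exact_mod_cast hk
  have hθ : 0 < π / N := div_pos pi_pos (by linarith)
  have hNθ : N * (π / N) = π := mul_div_cancel₀ π (by linarith)
  apply sin_lt_sin_of_lt_of_lt_pi_sub (by linarith [pi_pos]) (by nlinarith)
  nlinarith

lemma one_sub_inv_one_sub_div_sq_sq {a b c d : ℝ} (ha : a ≠ 0) (hb : b ≠ 0) (hc : c ≠ 0)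
    (habcd : a * c = b ^ 2 - d ^ 2) :
    (1 - 1 / (1 - d ^ 2 / b ^ 2)) ^ 2 = (1 - (1 - d ^ 2 / a ^ 2)) * (1 - (1 - d ^ 2 / c ^ 2)) := by
  have hbd : b ^ 2 - d ^ 2 ≠ 0 := habcd ▸ mul_ne_zero ha hc
  have hlhs : 1 - 1 / (1 - d ^ 2 / b ^ 2) = -d ^ 2 / (a * c) := by
    rw [habcd]
    field_simp
    ring
  rw [hlhs]
  field_simp
  ring

lemma one_sub_sq_div_sq_mem_Ioo {a b : ℝ} (ha : 0 < a) (hab : a < b) :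
    0 < 1 - a ^ 2 / b ^ 2 ∧ 1 - a ^ 2 / b ^ 2 < 1 := by
  have hb : 0 < b := ha.trans hab
  constructor
  · rw [sub_pos, div_lt_one (by positivity)]
    gcongr
  · have : 0 < a ^ 2 / b ^ 2 := by positivity
    linarith

lemma sq_mul_eq_one_sub_sq_of_one_sub_inv_sq_eq {x p : ℝ} (hx : x ≠ 0)
    (h : (1 - 1 / x) ^ 2 = p) : x ^ 2 * p = (1 - x) ^ 2 := by
  rw [← h]
  field_simp
  ring

theorem constant_x_system_solution_general (n : ℕ) :
    ∀ x : ℕ → ℝ,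
      (∀ j, x j = 1 - Real.sin (π / (n + 3)) ^ 2 / Real.sin (π * (j + 1) / (n + 3)) ^ 2) →
      x 0 = 0 ∧ x (n + 1) = 0 ∧
      ∀ j, 1 ≤ j → j ≤ n →
        (0 < x j ∧ x j < 1) ∧
        (1 - 1 / x j) ^ 2 = (1 - x (j - 1)) * (1 - x (j + 1)) ∧
        x j ^ 2 * ((1 - x (j - 1)) * (1 - x (j + 1))) = (1 - x j) ^ 2 := by
  intro x hx
  set θ := π / (n + 3) with hθ
  have hx' (j : ℕ) : x j = 1 - sin θ ^ 2 / sin ((j + 1 : ℕ) * θ) ^ 2 := by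
    rw [hx, hθ]
    push_cast
    ring_nf
  have hsin_ne (k : ℕ) (hk : 0 < k) (hkn : k < n + 3) : sin (k * θ) ≠ 0 :=
    (sin_nat_mul_pi_div_pos hk (by exact_mod_cast hkn)).ne'
  have hsinθ : 0 < sin θ := by
    simpa using
      sin_nat_mul_pi_div_pos (N := n + 3) one_pos (by exact_mod_cast (by omega : 1 < n + 3))
  refine ⟨by simp [hx', hsinθ.ne'], ?_, fun j hj₁ hjn => ?_⟩
  · have hπ : ((n + 1 + 1 : ℕ) : ℝ) * θ = π - θ := by
      rw [hθ]
      field_simp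
      push_cast
      ring
    rw [hx', hπ, sin_pi_sub, div_self (pow_ne_zero 2 hsinθ.ne'), sub_self]
  obtain ⟨m, rfl⟩ := Nat.exists_eq_add_of_le' hj₁
  rw [Nat.add_sub_cancel, hx', hx', hx']
  have hrec := one_sub_inv_one_sub_div_sq_sq (hsin_ne (m + 1) (by omega) (by omega))
    (hsin_ne (m + 2) (by omega) (by omega)) (hsin_ne (m + 3) (by omega) (by omega))
    (sin_nat_mul_mul_sin_nat_add_two_mul θ (m + 1))
  have hmem := one_sub_sq_div_sq_mem_Ioo hsinθ <|
    sin_pi_div_lt_sin_nat_mul_pi_div (N := n + 3) (k := m + 2) (by omega)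
      (by exact_mod_cast (by omega : m + 2 + 1 < n + 3))
  exact ⟨hmem, hrec, sq_mul_eq_one_sub_sq_of_one_sub_inv_sq_eq hmem.1.ne' hrec⟩

/-- The constant (`i`-independent) values
`x_j = 1 − sin²(π/(n+3))/sin²(π(j+1)/(n+3))`, `1 ≤ j ≤ n`
(with `x_0 = x_{n+1} = 0`), lie in `(0,1)` and satisfy the constant specialization of the
X-system: `(1 − 1/x_j)² = (1 − x_{j−1})(1 − x_{j+1})`, equivalently (Cartan-matrix form)
`x_j² · (1 − x_{j−1})(1 − x_{j+1}) = (1 − x_j)²`, i.e. `x_j² = ∏_l (1 − x_l)^{A_{jl}}`. -/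
theorem constant_x_system_solution (n : ℕ) (hn : 1 ≤ n) :
    ∀ x : ℕ → ℝ,
      (∀ j, x j = 1 - Real.sin (π / (n + 3)) ^ 2 / Real.sin (π * (j + 1) / (n + 3)) ^ 2) →
      x 0 = 0 ∧ x (n + 1) = 0 ∧
      ∀ j, 1 ≤ j → j ≤ n →
        (0 < x j ∧ x j < 1) ∧
        (1 - 1 / x j) ^ 2 = (1 - x (j - 1)) * (1 - x (j + 1)) ∧
        x j ^ 2 * ((1 - x (j - 1)) * (1 - x (j + 1))) = (1 - x j) ^ 2 :=
  constant_x_system_solution_general n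
end

section
/- Let X(i,j)(z) for i ∈ ℤ, 1 ≤ j ≤ n be functions [0,1] → ℝ satisfying the X-system for every z ∈ [0,1], such that: (1) 0 < X(i,j)(0) < 1 for all i,j; (2) X(0,j) and X(1,j) are continuously differentiable; (3) 0 < X(i,j)(z) < 1 for i = 0,1 and all z. Then for all i,j, X(i,j) is continuously differentiable and 0 < X(i,j)(z) < 1 for all z ∈ [0,1]. -/
/-! Each equation of the X-system is solvable for its unknown corner: with `b = 1 - 1/X(i-1,j)`
and `a = (1 - X(i,j-1))(1 - X(i,j+1))`, it reads `b · (1 - 1/X(i+1,j)) = a`, hence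
`X(i+1,j) = b / (b - a)`. When row `i - 1` takes values in `(0,1)` and row `i` values below `1`
(the boundary columns are `0`), we have `b < 0 < a`, so `b / (b - a) ∈ (0,1)`, and it is as
smooth as the data. Two consecutive rows in `(0,1)` thus determine the neighbouring rows on both
sides with the same properties, and the theorem follows by induction in both directions from
rows `0` and `1`. -/

open Set

lemma eq_div_sub_of_mul_one_sub_one_div_eq {a b x : ℝ} (hb : b < 0) (ha : 0 < a)
    (h : b * (1 - 1 / x) = a) : x = b / (b - a) := by
  -- with Lean's `1 / 0 = 0`, `x = 0` would turn the relation into `b = a`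
  have hx : x ≠ 0 := by
    rintro rfl
    simp only [div_zero, sub_zero, mul_one] at h
    linarith
  rw [eq_div_iff (by linarith), ← h]
  field_simp
  ring

lemma div_sub_mem_Ioo {a b : ℝ} (hb : b < 0) (ha : 0 < a) : b / (b - a) ∈ Ioo 0 1 :=
  ⟨div_pos_of_neg_of_neg hb (by linarith), (div_lt_one_of_neg (by linarith)).2 (by linarith)⟩

lemma one_sub_one_div_neg {y : ℝ} (hy : 0 < y ∧ y < 1) : 1 - 1 / y < 0 := by
  have : 1 < 1 / y := by rw [lt_div_iff₀ hy.1]; linarith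
  linarith

theorem contDiffOn_and_mem_Ioo_of_x_relation {E : Type*} [NormedAddCommGroup E]
    [NormedSpace ℝ E] {s : Set E} {k : WithTop ℕ∞} {f g p q : E → ℝ}
    (hf : ContDiffOn ℝ k f s) (hp : ContDiffOn ℝ k p s) (hq : ContDiffOn ℝ k q s)
    (hf01 : ∀ z ∈ s, 0 < f z ∧ f z < 1) (hp1 : ∀ z ∈ s, p z < 1) (hq1 : ∀ z ∈ s, q z < 1)
    (hrel : ∀ z ∈ s, (1 - 1 / f z) * (1 - 1 / g z) = (1 - p z) * (1 - q z)) :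
    ContDiffOn ℝ k g s ∧ ∀ z ∈ s, 0 < g z ∧ g z < 1 := by
  set b : E → ℝ := fun z ↦ 1 - 1 / f z
  set a : E → ℝ := fun z ↦ (1 - p z) * (1 - q z)
  have hb : ∀ z ∈ s, b z < 0 := fun z hz ↦ one_sub_one_div_neg (hf01 z hz)
  have ha : ∀ z ∈ s, 0 < a z := fun z hz ↦
    mul_pos (by linarith [hp1 z hz]) (by linarith [hq1 z hz])
  have hg : ∀ z ∈ s, g z = b z / (b z - a z) := fun z hz ↦
    eq_div_sub_of_mul_one_sub_one_div_eq (hb z hz) (ha z hz) (hrel z hz)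
  refine ⟨?_, fun z hz ↦ hg z hz ▸ div_sub_mem_Ioo (hb z hz) (ha z hz)⟩
  have hbC : ContDiffOn ℝ k b s :=
    contDiffOn_const.sub (contDiffOn_const.div hf fun z hz ↦ (hf01 z hz).1.ne')
  have haC : ContDiffOn ℝ k a s := (contDiffOn_const.sub hp).mul (contDiffOn_const.sub hq)
  exact (hbC.div (hbC.sub haC) fun z hz ↦ by linarith [hb z hz, ha z hz]).congr hg

theorem Int.forall_of_two_step {P : ℤ → Prop} (h0 : P 0) (h1 : P 1)
    (hup : ∀ i, P i → P (i + 1) → P (i + 2)) (hdown : ∀ i, P i → P (i + 1) → P (i - 1)) :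
    ∀ i, P i := by
  suffices ∀ i, P i ∧ P (i + 1) from fun i ↦ (this i).1
  intro i
  induction i using Int.induction_on with
  | zero => exact ⟨h0, h1⟩
  | succ i ih => exact ⟨ih.2, by simpa [add_assoc] using hup i ih.1 ih.2⟩
  | pred i ih => exact ⟨hdown _ ih.1 ih.2, by simpa using ih.1⟩

section XSystem

variable {n : ℤ} {X : ℤ → ℤ → ℝ → ℝ}

def IsRegularRow (n : ℤ) (X : ℤ → ℤ → ℝ → ℝ) (i : ℤ) : Prop :=
  ∀ j, 1 ≤ j → j ≤ n → ContDiffOn ℝ 1 (X i j) (Icc 0 1) ∧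
    ∀ z ∈ Icc (0 : ℝ) 1, 0 < X i j z ∧ X i j z < 1

lemma IsRegularRow.contDiffOn_and_lt_one (hb : ∀ i z, X i 0 z = 0 ∧ X i (n + 1) z = 0)
    {i : ℤ} (hi : IsRegularRow n X i) {k : ℤ} (hk0 : 0 ≤ k) (hkn : k ≤ n + 1) :
    ContDiffOn ℝ 1 (X i k) (Icc 0 1) ∧ ∀ z ∈ Icc (0 : ℝ) 1, X i k z < 1 := by
  have hzero : k = 0 ∨ k = n + 1 → X i k = 0 := by
    rintro (rfl | rfl) <;> ext z
    exacts [(hb i z).1, (hb i z).2]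
  by_cases hbd : k = 0 ∨ k = n + 1
  · rw [hzero hbd]
    exact ⟨contDiffOn_const, fun _ _ ↦ zero_lt_one⟩
  · obtain ⟨hC, h01⟩ := hi k (by omega) (by omega)
    exact ⟨hC, fun z hz ↦ (h01 z hz).2⟩

lemma IsRegularRow.of_relation (hb : ∀ i z, X i 0 z = 0 ∧ X i (n + 1) z = 0) {a b c : ℤ}
    (ha : IsRegularRow n X a) (hbr : IsRegularRow n X b)
    (hrel : ∀ j, 1 ≤ j → j ≤ n → ∀ z ∈ Icc (0 : ℝ) 1,
      (1 - 1 / X b j z) * (1 - 1 / X c j z) = (1 - X a (j - 1) z) * (1 - X a (j + 1) z)) :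
    IsRegularRow n X c := by
  intro j hj1 hjn
  obtain ⟨hCl, hl1⟩ := ha.contDiffOn_and_lt_one hb (k := j - 1) (by omega) (by omega)
  obtain ⟨hCr, hr1⟩ := ha.contDiffOn_and_lt_one hb (k := j + 1) (by omega) (by omega)
  obtain ⟨hCb, hb01⟩ := hbr j hj1 hjn
  exact contDiffOn_and_mem_Ioo_of_x_relation hCb hCl hCr hb01 hl1 hr1 (hrel j hj1 hjn)

end XSystem

theorem x_system_interpolation_general (n : ℤ) (X : ℤ → ℤ → ℝ → ℝ)
    (hb : ∀ i z, X i 0 z = 0 ∧ X i (n + 1) z = 0)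
    (hsys : ∀ i j, 1 ≤ j → j ≤ n → ∀ z ∈ Set.Icc (0:ℝ) 1,
      (1 - 1 / X (i - 1) j z) * (1 - 1 / X (i + 1) j z)
        = (1 - X i (j - 1) z) * (1 - X i (j + 1) z))
    (hC1 : ∀ i, i = 0 ∨ i = 1 → ∀ j, 1 ≤ j → j ≤ n → ContDiffOn ℝ 1 (X i j) (Set.Icc 0 1))
    (h01 : ∀ i, i = 0 ∨ i = 1 → ∀ j, 1 ≤ j → j ≤ n →
      ∀ z ∈ Set.Icc (0:ℝ) 1, 0 < X i j z ∧ X i j z < 1) :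
    ∀ i j, 1 ≤ j → j ≤ n → ContDiffOn ℝ 1 (X i j) (Set.Icc 0 1) ∧
      ∀ z ∈ Set.Icc (0:ℝ) 1, 0 < X i j z ∧ X i j z < 1 := by
  have hrow : ∀ i, i = 0 ∨ i = 1 → IsRegularRow n X i := fun i hi j hj1 hjn ↦
    ⟨hC1 i hi j hj1 hjn, h01 i hi j hj1 hjn⟩
  refine Int.forall_of_two_step (P := IsRegularRow n X) (hrow 0 (.inl rfl)) (hrow 1 (.inr rfl)) ?_ ?_
  · intro i hi hi1
    refine hi1.of_relation hb hi fun j hj1 hjn z hz ↦ ?_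
    simpa [add_assoc, one_add_one_eq_two] using hsys (i + 1) j hj1 hjn z hz
  · intro i hi hi1
    refine hi.of_relation hb hi1 fun j hj1 hjn z hz ↦ ?_
    rw [mul_comm]
    exact hsys i j hj1 hjn z hz

/-- If functions `X(i,j) : [0,1] → ℝ` satisfy the (A_n, A_1) X-system for every `z ∈ [0,1]`,
with `0 < X(i,j)(0) < 1` for all `i,j`, and `X(0,j), X(1,j)` continuously differentiable with
values in `(0,1)` on `[0,1]`, then every `X(i,j)` is continuously differentiable with values
in `(0,1)` on `[0,1]`. -/
theorem x_system_interpolation (n : ℤ) (hn : 1 ≤ n) (X : ℤ → ℤ → ℝ → ℝ)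
    (hb : ∀ i z, X i 0 z = 0 ∧ X i (n + 1) z = 0)
    (hnz : ∀ i j, 1 ≤ j → j ≤ n → ∀ z ∈ Set.Icc (0:ℝ) 1, X i j z ≠ 0)
    (hsys : ∀ i j, 1 ≤ j → j ≤ n → ∀ z ∈ Set.Icc (0:ℝ) 1,
      (1 - 1 / X (i - 1) j z) * (1 - 1 / X (i + 1) j z)
        = (1 - X i (j - 1) z) * (1 - X i (j + 1) z))
    (hzero : ∀ i j, 1 ≤ j → j ≤ n → 0 < X i j 0 ∧ X i j 0 < 1)
    (hC1 : ∀ i, i = 0 ∨ i = 1 → ∀ j, 1 ≤ j → j ≤ n → ContDiffOn ℝ 1 (X i j) (Set.Icc 0 1))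
    (h01 : ∀ i, i = 0 ∨ i = 1 → ∀ j, 1 ≤ j → j ≤ n →
      ∀ z ∈ Set.Icc (0:ℝ) 1, 0 < X i j z ∧ X i j z < 1) :
    ∀ i j, 1 ≤ j → j ≤ n → ContDiffOn ℝ 1 (X i j) (Set.Icc 0 1) ∧
      ∀ z ∈ Set.Icc (0:ℝ) 1, 0 < X i j z ∧ X i j z < 1 :=
  x_system_interpolation_general n X hb hsys hC1 h01
end
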